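/- arXiv:1312.3827 — 5 statements merged into one kernel-verified Lean document; each statement's English description precedes it below -/
import Mathlib

section
/- For any square-summable sequence φ: ℤ → ℂ, the squared supremum norm satisfies ‖φ‖_{ℓ∞(ℤ)}² ≤ ‖φ‖_{ℓ²(ℤ)} · ‖Dφ‖_{ℓ²(ℤ)}, where (Dφ)(n) = φ(n+1) − φ(n). -/
/-!
Since `‖φ k‖² → 0` as `k → ±∞`, telescoping `‖φ k‖²` from `n` to `+∞` and from `-∞` to `n` gives
`2 ‖φ n‖² ≤ ∑ₖ |‖φ (k+1)‖² - ‖φ k‖²| ≤ ∑ₖ (‖φ (k+1)‖ + ‖φ k‖) ‖Dφ k‖`, and Cauchy–Schwarz together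
with the shift invariance of the `ℓ²` norm bounds the right side by `2 ‖φ‖₂ ‖Dφ‖₂`.
-/

open Filter Topology Finset

lemma summable_and_tsum_mul_le_sqrt_mul_sqrt {ι : Type*} {f g : ι → ℝ} (hf : ∀ i, 0 ≤ f i)
    (hg : ∀ i, 0 ≤ g i) (hf_sum : Summable fun i => f i ^ 2) (hg_sum : Summable fun i => g i ^ 2) :
    (Summable fun i => f i * g i) ∧
      ∑' i, f i * g i ≤ √(∑' i, f i ^ 2) * √(∑' i, g i ^ 2) := by
  simpa [Real.sqrt_eq_rpow] using Real.summable_and_inner_le_Lp_mul_Lq_tsum_of_nonneg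
    Real.HolderConjugate.two_two hf hg (by simpa using hf_sum) (by simpa using hg_sum)

section Normed

variable {E : Type*} [SeminormedAddCommGroup E]

lemma abs_norm_sq_sub_norm_sq_le (x y : E) :
    |‖x‖ ^ 2 - ‖y‖ ^ 2| ≤ (‖x‖ + ‖y‖) * ‖x - y‖ := by
  rw [sq_sub_sq, abs_mul, abs_of_nonneg (by positivity)]
  gcongr
  exact abs_norm_sub_norm_le x y

lemma Summable.norm_sub_sq {ι : Type*} {f g : ι → E} (hf : Summable fun i => ‖f i‖ ^ 2)
    (hg : Summable fun i => ‖g i‖ ^ 2) : Summable fun i => ‖f i - g i‖ ^ 2 := by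
  refine .of_nonneg_of_le (fun i => by positivity) (fun i => ?_) ((hf.add hg).mul_left 2)
  nlinarith [norm_sub_le (f i) (g i), norm_nonneg (f i - g i), sq_nonneg (‖f i‖ - ‖g i‖)]

lemma norm_sub_le_sum_range_norm_sub (f : ℤ → E) (a : ℤ) (j : ℕ) :
    ‖f (a + j) - f a‖ ≤ ∑ i ∈ range j, ‖f (a + i + 1) - f (a + i)‖ := by
  have := Finset.sum_range_sub (fun i : ℕ => f (a + i)) j
  simp only [Nat.cast_add, Nat.cast_one, Nat.cast_zero, add_zero, ← add_assoc] at this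
  rw [← this]
  exact norm_sum_le _ _

lemma two_mul_norm_le_add_add_sum_range (f : ℤ → E) (n : ℤ) (j : ℕ) :
    2 * ‖f n‖ ≤ ‖f (n - j)‖ + ‖f (n + j)‖ +
      ∑ i ∈ range (j + j), ‖f (n - j + i + 1) - f (n - j + i)‖ := by
  have left : ‖f n - f (n - j)‖ ≤ ∑ i ∈ range j, ‖f (n - j + i + 1) - f (n - j + i)‖ := by
    simpa using norm_sub_le_sum_range_norm_sub f (n - j) j
  have right : ‖f (n + j) - f n‖ ≤ ∑ i ∈ range j, ‖f (n + i + 1) - f (n + i)‖ :=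
    norm_sub_le_sum_range_norm_sub f n j
  have split : ∑ i ∈ range (j + j), ‖f (n - j + i + 1) - f (n - j + i)‖ =
      ∑ i ∈ range j, ‖f (n - j + i + 1) - f (n - j + i)‖ +
        ∑ i ∈ range j, ‖f (n + i + 1) - f (n + i)‖ := by
    rw [sum_range_add]
    congr! 3 with i
    rw [show n - j + ((j + i : ℕ) : ℤ) = n + i by push_cast; ring]
  have := norm_le_norm_add_norm_sub' (f n) (f (n - j))
  have := norm_le_norm_add_norm_sub (f (n + j)) (f n)
  linarith

lemma two_mul_norm_le_tsum_norm_sub {f : ℤ → E} (hf : Tendsto f cofinite (𝓝 0))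
    (hd : Summable fun k => ‖f (k + 1) - f k‖) (n : ℤ) :
    2 * ‖f n‖ ≤ ∑' k, ‖f (k + 1) - f k‖ := by
  have shift_inj (a : ℤ) : Function.Injective fun i : ℕ => a + i :=
    (add_right_injective a).comp Nat.cast_injective
  have sum_le (j : ℕ) :
      ∑ i ∈ range (j + j), ‖f (n - j + i + 1) - f (n - j + i)‖ ≤ ∑' k, ‖f (k + 1) - f k‖ :=
    (Summable.sum_le_tsum _ (fun _ _ => norm_nonneg _) (hd.comp_injective (shift_inj _))).trans
      (tsum_comp_le_tsum_of_inj hd (fun _ => norm_nonneg _) (shift_inj _))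
  have norm_tendsto_zero {g : ℕ → ℤ} (hg : Function.Injective g) :
      Tendsto (fun j => ‖f (g j)‖) atTop (𝓝 0) := by
    rw [← Nat.cofinite_eq_atTop]
    simpa using (hf.comp hg.tendsto_cofinite).norm
  have lim := ((norm_tendsto_zero ((sub_right_injective (b := n)).comp Nat.cast_injective)).add
    (norm_tendsto_zero (shift_inj n))).add_const (∑' k, ‖f (k + 1) - f k‖)
  refine ge_of_tendsto' (by simpa using lim) fun j => ?_
  grw [two_mul_norm_le_add_add_sum_range f n j, sum_le j]

lemma summable_and_tsum_norm_sq_sub_le {φ : ℤ → E} (h : Summable fun k => ‖φ k‖ ^ 2) :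
    (Summable fun k => ‖‖φ (k + 1)‖ ^ 2 - ‖φ k‖ ^ 2‖) ∧
      ∑' k, ‖‖φ (k + 1)‖ ^ 2 - ‖φ k‖ ^ 2‖ ≤
        2 * (√(∑' k, ‖φ k‖ ^ 2) * √(∑' k, ‖φ (k + 1) - φ k‖ ^ 2)) := by
  have h_shift : Summable fun k => ‖φ (k + 1)‖ ^ 2 := h.comp_injective (add_left_injective 1)
  have h_shift_tsum : ∑' k, ‖φ (k + 1)‖ ^ 2 = ∑' k, ‖φ k‖ ^ 2 :=
    (Equiv.addRight 1).tsum_eq fun k => ‖φ k‖ ^ 2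
  have hD : Summable fun k => ‖φ (k + 1) - φ k‖ ^ 2 := h_shift.norm_sub_sq h
  obtain ⟨hs₁, hle₁⟩ := summable_and_tsum_mul_le_sqrt_mul_sqrt (fun k => norm_nonneg (φ (k + 1)))
    (fun k => norm_nonneg (φ (k + 1) - φ k)) h_shift hD
  obtain ⟨hs₂, hle₂⟩ := summable_and_tsum_mul_le_sqrt_mul_sqrt (fun k => norm_nonneg (φ k))
    (fun k => norm_nonneg (φ (k + 1) - φ k)) h hD
  rw [h_shift_tsum] at hle₁
  have hbound (k : ℤ) : ‖‖φ (k + 1)‖ ^ 2 - ‖φ k‖ ^ 2‖ ≤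
      ‖φ (k + 1)‖ * ‖φ (k + 1) - φ k‖ + ‖φ k‖ * ‖φ (k + 1) - φ k‖ := by
    rw [Real.norm_eq_abs, ← add_mul]
    exact abs_norm_sq_sub_norm_sq_le _ _
  have hs := (hs₁.add hs₂).of_nonneg_of_le (fun _ => norm_nonneg _) hbound
  refine ⟨hs, ?_⟩
  calc ∑' k, ‖‖φ (k + 1)‖ ^ 2 - ‖φ k‖ ^ 2‖
      ≤ ∑' k, ‖φ (k + 1)‖ * ‖φ (k + 1) - φ k‖ + ∑' k, ‖φ k‖ * ‖φ (k + 1) - φ k‖ := by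
        rw [← hs₁.tsum_add hs₂]
        exact hs.tsum_le_tsum hbound (hs₁.add hs₂)
    _ ≤ _ := by linarith

lemma norm_sq_le_sqrt_tsum_mul_sqrt_tsum {φ : ℤ → E} (h : Summable fun k => ‖φ k‖ ^ 2) (n : ℤ) :
    ‖φ n‖ ^ 2 ≤ √(∑' k, ‖φ k‖ ^ 2) * √(∑' k, ‖φ (k + 1) - φ k‖ ^ 2) := by
  obtain ⟨hs, hle⟩ := summable_and_tsum_norm_sq_sub_le h
  have := two_mul_norm_le_tsum_norm_sub (f := fun k => ‖φ k‖ ^ 2) h.tendsto_cofinite_zero hs n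
  rw [Real.norm_of_nonneg (by positivity)] at this
  linarith

end Normed

/-- Discrete Agmon inequality on ℤ. -/
theorem discrete_agmon (φ : ℤ → ℂ) (h : Summable fun n => ‖φ n‖ ^ 2) :
    (⨆ n : ℤ, ‖φ n‖) ^ 2 ≤
      Real.sqrt (∑' n : ℤ, ‖φ n‖ ^ 2) *
        Real.sqrt (∑' n : ℤ, ‖φ (n + 1) - φ n‖ ^ 2) := by
  have hAB : 0 ≤ √(∑' n : ℤ, ‖φ n‖ ^ 2) * √(∑' n : ℤ, ‖φ (n + 1) - φ n‖ ^ 2) := by positivity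
  rw [← Real.le_sqrt (Real.iSup_nonneg fun n => norm_nonneg (φ n)) hAB]
  exact Real.iSup_le (fun n => (Real.le_sqrt (norm_nonneg _) hAB).mpr
    (norm_sq_le_sqrt_tsum_mul_sqrt_tsum h n)) (Real.sqrt_nonneg _)
end

section
/- For any square-summable sequence φ: ℤ → ℂ and any n ∈ ℤ, |φ(n)|² ≤ ‖φ‖_{ℓ²(ℤ)} · ‖Dφ‖_{ℓ²(ℤ)}, where (Dφ)(n) = φ(n+1) − φ(n). -/
open Filter Finset

lemma agmon_summable_mul {ι : Type*} {f g : ι → ℝ}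
    (hf : Summable fun i => f i ^ 2) (hg : Summable fun i => g i ^ 2) :
    Summable fun i => f i * g i := by
  have h1 : Summable fun i => |f i * g i| := by
    refine Summable.of_nonneg_of_le (fun i => abs_nonneg _) (fun i => ?_)
      ((hf.add hg).div_const 2)
    rw [abs_mul]
    nlinarith [sq_nonneg (|f i| - |g i|), sq_abs (f i), sq_abs (g i)]
  exact h1.of_abs

lemma agmon_tsum_mul_le {ι : Type*} {f g : ι → ℝ}
    (hf : Summable fun i => f i ^ 2) (hg : Summable fun i => g i ^ 2) :
    ∑' i, f i * g i ≤ Real.sqrt (∑' i, f i ^ 2) * Real.sqrt (∑' i, g i ^ 2) := by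
  refine Summable.tsum_le_of_sum_le (agmon_summable_mul hf hg) fun s => ?_
  calc ∑ i ∈ s, f i * g i
      ≤ Real.sqrt (∑ i ∈ s, f i ^ 2) * Real.sqrt (∑ i ∈ s, g i ^ 2) :=
        Real.sum_mul_le_sqrt_mul_sqrt s f g
    _ ≤ Real.sqrt (∑' i, f i ^ 2) * Real.sqrt (∑' i, g i ^ 2) := by
        gcongr
        · exact Summable.sum_le_tsum s (fun i _ => sq_nonneg _) hf
        · exact Summable.sum_le_tsum s (fun i _ => sq_nonneg _) hg

/-- Pointwise discrete Agmon inequality on ℤ. -/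
theorem discrete_agmon_pointwise (φ : ℤ → ℂ) (h : Summable fun k => ‖φ k‖ ^ 2) (n : ℤ) :
    ‖φ n‖ ^ 2 ≤
      Real.sqrt (∑' k : ℤ, ‖φ k‖ ^ 2) *
        Real.sqrt (∑' k : ℤ, ‖φ (k + 1) - φ k‖ ^ 2) := by
  set a : ℤ → ℝ := fun k => ‖φ k‖ ^ 2 with ha_def
  have ha : Summable a := h
  have ha' : Summable fun k => a (k + 1) := ha.comp_injective (add_left_injective 1)
  -- b is the square of the difference sequence
  have hb : Summable fun k => ‖φ (k + 1) - φ k‖ ^ 2 := by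
    refine Summable.of_nonneg_of_le (fun k => sq_nonneg _) (fun k => ?_)
      (((ha'.add ha).mul_left 2))
    have h1 : ‖φ (k + 1) - φ k‖ ≤ ‖φ (k + 1)‖ + ‖φ k‖ := norm_sub_le _ _
    have h2 : (0:ℝ) ≤ ‖φ (k + 1) - φ k‖ := norm_nonneg _
    simp only [ha_def]
    have h3 : ‖φ (k + 1) - φ k‖ ^ 2 ≤ (‖φ (k + 1)‖ + ‖φ k‖) ^ 2 := by
      exact pow_le_pow_left₀ h2 h1 2
    nlinarith [sq_nonneg (‖φ (k + 1)‖ - ‖φ k‖)]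
  -- term sequences for Cauchy-Schwarz
  have ht1 : Summable fun k => ‖φ (k + 1) - φ k‖ * ‖φ (k + 1)‖ := agmon_summable_mul hb ha'
  have ht2 : Summable fun k => ‖φ (k + 1) - φ k‖ * ‖φ k‖ := agmon_summable_mul hb ha
  set c : ℤ → ℝ := fun k => ‖φ (k + 1) - φ k‖ * ‖φ (k + 1)‖ + ‖φ (k + 1) - φ k‖ * ‖φ k‖
    with hc_def
  have hc : Summable c := ht1.add ht2
  have hc0 : ∀ k, 0 ≤ c k := fun k => by positivity
  -- difference sequence d
  set d : ℤ → ℝ := fun k => a (k + 1) - a k with hd_def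
  have hd : Summable d := ha'.sub ha
  have hdc : ∀ k, |d k| ≤ c k := by
    intro k
    have key : d k = (‖φ (k + 1)‖ - ‖φ k‖) * (‖φ (k + 1)‖ + ‖φ k‖) := by
      simp only [hd_def, ha_def]; ring
    have h1 : |‖φ (k + 1)‖ - ‖φ k‖| ≤ ‖φ (k + 1) - φ k‖ := abs_norm_sub_norm_le _ _
    have habs : |‖φ (k + 1)‖ + ‖φ k‖| = ‖φ (k + 1)‖ + ‖φ k‖ :=
      abs_of_nonneg (by positivity)
    calc |d k| = |‖φ (k + 1)‖ - ‖φ k‖| * (‖φ (k + 1)‖ + ‖φ k‖) := by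
          rw [key, abs_mul, habs]
      _ ≤ ‖φ (k + 1) - φ k‖ * (‖φ (k + 1)‖ + ‖φ k‖) := by
          gcongr
      _ = c k := by simp only [hc_def]; ring
  have ha0 : Tendsto a cofinite (nhds 0) := ha.tendsto_cofinite_zero
  -- left telescoping: a n ≤ ∑'_{m : ℕ} c (n - 1 - m)
  have hinjL : Function.Injective (fun m : ℕ => n - 1 - (m : ℤ)) := by
    intro m m' hmm; simpa using hmm
  have heL : Summable fun m : ℕ => d (n - 1 - m) := hd.comp_injective hinjL
  have hsumL : ∑' m : ℕ, d (n - 1 - m) = a n := by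
    have h1 : Tendsto (fun M : ℕ => ∑ m ∈ range M, d (n - 1 - m)) atTop
        (nhds (∑' m : ℕ, d (n - 1 - m))) := heL.hasSum.tendsto_sum_nat
    have h2 : ∀ M : ℕ, ∑ m ∈ range M, d (n - 1 - m) = a n - a (n - M) := by
      intro M
      have hts := Finset.sum_range_sub' (fun m : ℕ => a (n - m)) M
      simp only [Nat.cast_zero, sub_zero] at hts
      rw [← hts]
      refine Finset.sum_congr rfl fun m _ => ?_
      simp only [hd_def]
      have e1 : n - 1 - (m : ℤ) + 1 = n - m := by ring
      have e2 : n - 1 - (m : ℤ) = n - ((m + 1 : ℕ) : ℤ) := by push_cast; ring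
      rw [e1, e2]
    have h3 : Tendsto (fun M : ℕ => a n - a (n - M)) atTop (nhds (a n)) := by
      have hcof : Tendsto (fun M : ℕ => n - (M : ℤ)) atTop cofinite := by
        have hinj : Function.Injective (fun M : ℕ => n - (M : ℤ)) := by
          intro m m' hmm; simpa using hmm
        rw [← Nat.cofinite_eq_atTop]
        exact hinj.tendsto_cofinite
      have := ha0.comp hcof
      simpa using tendsto_const_nhds.sub this
    have h4 : Tendsto (fun M : ℕ => ∑ m ∈ range M, d (n - 1 - m)) atTop (nhds (a n)) := by
      simpa only [h2] using h3
    exact tendsto_nhds_unique h1 h4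
  have hleft : a n ≤ ∑' m : ℕ, c (n - 1 - m) := by
    rw [← hsumL]
    exact Summable.tsum_le_tsum (fun m => (le_abs_self _).trans (hdc _)) heL (hc.comp_injective hinjL)
  -- right telescoping: a n ≤ ∑'_{m : ℕ} c (n + m)
  have hinjR : Function.Injective (fun m : ℕ => n + (m : ℤ)) := by
    intro m m' hmm; simpa using hmm
  have heR : Summable fun m : ℕ => -d (n + m) := (hd.comp_injective hinjR).neg
  have hsumR : ∑' m : ℕ, -d (n + m) = a n := by
    have h1 : Tendsto (fun M : ℕ => ∑ m ∈ range M, -d (n + m)) atTop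
        (nhds (∑' m : ℕ, -d (n + m))) := heR.hasSum.tendsto_sum_nat
    have h2 : ∀ M : ℕ, ∑ m ∈ range M, -d (n + m) = a n - a (n + M) := by
      intro M
      have hts := Finset.sum_range_sub' (fun m : ℕ => a (n + m)) M
      simp only [Nat.cast_zero, add_zero] at hts
      rw [← hts]
      refine Finset.sum_congr rfl fun m _ => ?_
      simp only [hd_def]
      have e2 : n + (m : ℤ) + 1 = n + ((m + 1 : ℕ) : ℤ) := by push_cast; ring
      rw [e2]
      ring
    have h3 : Tendsto (fun M : ℕ => a n - a (n + M)) atTop (nhds (a n)) := by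
      have hcof : Tendsto (fun M : ℕ => n + (M : ℤ)) atTop cofinite := by
        rw [← Nat.cofinite_eq_atTop]
        exact hinjR.tendsto_cofinite
      have := ha0.comp hcof
      simpa using tendsto_const_nhds.sub this
    have h4 : Tendsto (fun M : ℕ => ∑ m ∈ range M, -d (n + m)) atTop (nhds (a n)) := by
      simpa only [h2] using h3
    exact tendsto_nhds_unique h1 h4
  have hright : a n ≤ ∑' m : ℕ, c (n + m) := by
    rw [← hsumR]
    refine Summable.tsum_le_tsum (fun m => ?_) heR (hc.comp_injective hinjR)
    exact (neg_le_abs _).trans (hdc _)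
  -- combine half-line sums into the full sum
  set s : Set ℤ := {k | k < n} with hs_def
  have hL2 : ∑' m : ℕ, c (n - 1 - m) ≤ ∑' k : ↥s, c k := by
    refine Summable.tsum_le_tsum_of_inj (fun m : ℕ => (⟨n - 1 - m, by simp only [hs_def, Set.mem_setOf_eq]; omega⟩ : ↥s))
      (fun m m' hmm => ?_) (fun _ _ => hc0 _) (fun m => le_rfl)
      (hc.comp_injective hinjL) (hc.subtype s)
    have := congrArg Subtype.val hmm
    simpa using hinjL this
  have hR2 : ∑' m : ℕ, c (n + m) ≤ ∑' k : ↥sᶜ, c k := by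
    refine Summable.tsum_le_tsum_of_inj
      (fun m : ℕ => (⟨n + m, by simp only [hs_def, Set.mem_compl_iff, Set.mem_setOf_eq, not_lt]; omega⟩ : ↥sᶜ))
      (fun m m' hmm => ?_) (fun _ _ => hc0 _) (fun m => le_rfl)
      (hc.comp_injective hinjR) (hc.subtype sᶜ)
    have := congrArg Subtype.val hmm
    simpa using hinjR this
  have hsplit : (∑' k : ↥s, c k) + (∑' k : ↥sᶜ, c k) = ∑' k : ℤ, c k :=
    Summable.tsum_add_tsum_compl (hc.subtype s) (hc.subtype sᶜ)
  have hkey : 2 * a n ≤ ∑' k : ℤ, c k := by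
    rw [← hsplit]
    have := add_le_add (hleft.trans hL2) (hright.trans hR2)
    linarith
  -- Cauchy-Schwarz on the full sum
  have hcs : ∑' k : ℤ, c k ≤
      2 * (Real.sqrt (∑' k : ℤ, ‖φ k‖ ^ 2) * Real.sqrt (∑' k : ℤ, ‖φ (k + 1) - φ k‖ ^ 2)) := by
    have hshift : (∑' k : ℤ, ‖φ (k + 1)‖ ^ 2) = ∑' k : ℤ, ‖φ k‖ ^ 2 :=
      (Equiv.addRight (1 : ℤ)).tsum_eq (fun k => ‖φ k‖ ^ 2)
    have hcs1 : ∑' k : ℤ, ‖φ (k + 1) - φ k‖ * ‖φ (k + 1)‖ ≤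
        Real.sqrt (∑' k : ℤ, ‖φ (k + 1) - φ k‖ ^ 2) * Real.sqrt (∑' k : ℤ, ‖φ (k + 1)‖ ^ 2) :=
      agmon_tsum_mul_le hb ha'
    have hcs2 : ∑' k : ℤ, ‖φ (k + 1) - φ k‖ * ‖φ k‖ ≤
        Real.sqrt (∑' k : ℤ, ‖φ (k + 1) - φ k‖ ^ 2) * Real.sqrt (∑' k : ℤ, ‖φ k‖ ^ 2) :=
      agmon_tsum_mul_le hb ha
    rw [hshift] at hcs1
    have hcsum : ∑' k : ℤ, c k =
        (∑' k : ℤ, ‖φ (k + 1) - φ k‖ * ‖φ (k + 1)‖) +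
        ∑' k : ℤ, ‖φ (k + 1) - φ k‖ * ‖φ k‖ := Summable.tsum_add ht1 ht2
    rw [hcsum]
    have : Real.sqrt (∑' k : ℤ, ‖φ (k + 1) - φ k‖ ^ 2) * Real.sqrt (∑' k : ℤ, ‖φ k‖ ^ 2)
        = Real.sqrt (∑' k : ℤ, ‖φ k‖ ^ 2) * Real.sqrt (∑' k : ℤ, ‖φ (k + 1) - φ k‖ ^ 2) :=
      mul_comm _ _
    linarith
  have : a n = ‖φ n‖ ^ 2 := rfl
  linarith
end

section
/- For a square-summable sequence φ: ℤ² → ℂ, we have ‖φ‖_{ℓ∞(ℤ²)}⁴ ≤ ‖D₂D₁φ‖_{ℓ²(ℤ²)} · ‖D₁φ‖_{ℓ²(ℤ²)} · ‖D₂φ‖_{ℓ²(ℤ²)} · ‖φ‖_{ℓ²(ℤ²)}. -/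
/-!
For a square-summable `f : ℤ → E`, telescoping `‖f k‖ ^ 2` in from `-∞` and from `+∞` and
applying Cauchy–Schwarz gives the discrete Agmon inequality `‖f m‖ ^ 2 ≤ ‖Δf‖₂ ‖f‖₂`.
Along the second coordinate it bounds `‖φ (m, n)‖ ^ 4` by the product of the squared row norms
of `D2 φ` and `φ`. Applied to the `ℓ²(ℤ)`-valued sequence of rows `k ↦ φ (k, ·)`, whose
difference sequence is the row sequence of `D1 φ`, it bounds each squared row norm of `φ` by
`‖D1 φ‖₂ ‖φ‖₂`, and likewise for `D2 φ` since `D1` and `D2` commute.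
-/

noncomputable section

/-- Partial difference in the first coordinate on ℤ². -/
def D1 (φ : ℤ × ℤ → ℂ) : ℤ × ℤ → ℂ := fun p => φ (p.1 + 1, p.2) - φ p

/-- Partial difference in the second coordinate on ℤ². -/
def D2 (φ : ℤ × ℤ → ℂ) : ℤ × ℤ → ℂ := fun p => φ (p.1, p.2 + 1) - φ p

/-- The ℓ²(ℤ²) norm. -/
def l2 (φ : ℤ × ℤ → ℂ) : ℝ := Real.sqrt (∑' p : ℤ × ℤ, ‖φ p‖ ^ 2)

open Filter Topology

section SquareSummable

variable {ι : Type*}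

theorem summable_mul_of_summable_sq {a b : ι → ℝ} (ha : Summable fun i => a i ^ 2)
    (hb : Summable fun i => b i ^ 2) : Summable fun i => a i * b i :=
  (ha.add hb).of_norm_bounded fun i => by
    rw [Real.norm_eq_abs, abs_mul]
    nlinarith [sq_nonneg (|a i| - |b i|), sq_abs (a i), sq_abs (b i)]

theorem tsum_mul_le_sqrt_mul_sqrt {a b : ι → ℝ} (ha : Summable fun i => a i ^ 2)
    (hb : Summable fun i => b i ^ 2) :
    ∑' i, a i * b i ≤ √(∑' i, a i ^ 2) * √(∑' i, b i ^ 2) := by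
  refine (summable_mul_of_summable_sq ha hb).tsum_le_of_sum_le fun s => ?_
  refine (Real.sum_mul_le_sqrt_mul_sqrt s a b).trans ?_
  gcongr
  · exact ha.sum_le_tsum s fun i _ => sq_nonneg _
  · exact hb.sum_le_tsum s fun i _ => sq_nonneg _

variable {E : Type*} [SeminormedAddCommGroup E]

theorem summable_sq_norm_sub {f g : ι → E} (hf : Summable fun i => ‖f i‖ ^ 2)
    (hg : Summable fun i => ‖g i‖ ^ 2) : Summable fun i => ‖f i - g i‖ ^ 2 := by
  refine .of_nonneg_of_le (fun i => sq_nonneg _) (fun i => ?_) ((hf.add hg).mul_left 2)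
  have := norm_sub_le (f i) (g i)
  nlinarith [norm_nonneg (f i - g i), sq_nonneg (‖f i‖ - ‖g i‖)]

end SquareSummable

section Agmon

variable {E : Type*} [SeminormedAddCommGroup E]

theorem two_mul_norm_le_tsum_of_norm_sub_le {F : ℤ → E} {d : ℤ → ℝ}
    (hF : Tendsto F cofinite (𝓝 0)) (hFd : ∀ k, ‖F (k + 1) - F k‖ ≤ d k) (hd : Summable d)
    (m : ℤ) : 2 * ‖F m‖ ≤ ∑' k, d k := by
  have hshift : Summable fun k => d (m + k) := hd.comp_injective (add_right_injective m)
  have hneg : Function.Injective fun n : ℕ => -((n : ℤ) + 1) := fun a b hab => by simpa using hab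
  have hup : ‖F m‖ ≤ ∑' n : ℕ, d (m + n) := by
    have hlim : Tendsto (fun n : ℕ => F (m + n)) atTop (𝓝 0) := by
      rw [← Nat.cofinite_eq_atTop]
      exact hF.comp ((add_right_injective m).comp Nat.cast_injective).tendsto_cofinite
    simpa using dist_le_tsum_of_dist_le_of_tendsto₀ (fun n : ℕ => d (m + n))
      (fun n => by rw [dist_eq_norm', Nat.cast_succ, ← add_assoc]; exact hFd _)
      (hshift.comp_injective Nat.cast_injective) hlim
  have hdown : ‖F m‖ ≤ ∑' n : ℕ, d (m + -(n + 1)) := by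
    have hlim : Tendsto (fun n : ℕ => F (m + -n)) atTop (𝓝 0) := by
      rw [← Nat.cofinite_eq_atTop]
      exact hF.comp (Function.Injective.tendsto_cofinite fun a b hab => by simpa using hab)
    simpa using dist_le_tsum_of_dist_le_of_tendsto₀ (fun n : ℕ => d (m + -(n + 1)))
      (fun n => by
        have := hFd (m + -(n + 1))
        rwa [show m + -((n : ℤ) + 1) + 1 = m + -n by ring, ← dist_eq_norm] at this)
      (hshift.comp_injective hneg) hlim
  calc 2 * ‖F m‖ ≤ ∑' n : ℕ, d (m + n) + ∑' n : ℕ, d (m + -(n + 1)) := by linarith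
    _ = ∑' k, d (m + k) :=
      (tsum_of_nat_of_neg_add_one (f := fun k => d (m + k))
        (hshift.comp_injective Nat.cast_injective) (hshift.comp_injective hneg)).symm
    _ = ∑' k, d k := (Equiv.addLeft m).tsum_eq d

theorem sq_norm_le_sqrt_tsum_sq_norm_sub_mul_sqrt_tsum_sq_norm {f : ℤ → E}
    (hf : Summable fun k => ‖f k‖ ^ 2) (m : ℤ) :
    ‖f m‖ ^ 2 ≤ √(∑' k, ‖f (k + 1) - f k‖ ^ 2) * √(∑' k, ‖f k‖ ^ 2) := by
  have hf' : Summable fun k => ‖f (k + 1)‖ ^ 2 := hf.comp_injective (add_left_injective 1)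
  have hdf : Summable fun k => ‖f (k + 1) - f k‖ ^ 2 := summable_sq_norm_sub hf' hf
  have hΔ : ∀ k, ‖‖f (k + 1)‖ ^ 2 - ‖f k‖ ^ 2‖ ≤
      ‖f (k + 1)‖ * ‖f (k + 1) - f k‖ + ‖f k‖ * ‖f (k + 1) - f k‖ := fun k => by
    rw [Real.norm_eq_abs, sq_sub_sq, abs_mul, abs_of_nonneg (by positivity), ← add_mul]
    gcongr
    exact abs_norm_sub_norm_le _ _
  have h1 := tsum_mul_le_sqrt_mul_sqrt (a := fun k => ‖f (k + 1)‖) hf' hdf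
  have h2 := tsum_mul_le_sqrt_mul_sqrt (a := fun k => ‖f k‖) hf hdf
  have hshift : ∑' k, ‖f (k + 1)‖ ^ 2 = ∑' k, ‖f k‖ ^ 2 :=
    (Equiv.addRight 1).tsum_eq fun k => ‖f k‖ ^ 2
  have := two_mul_norm_le_tsum_of_norm_sub_le hf.tendsto_cofinite_zero hΔ
    ((summable_mul_of_summable_sq hf' hdf).add (summable_mul_of_summable_sq hf hdf)) m
  rw [Summable.tsum_add (summable_mul_of_summable_sq hf' hdf)
    (summable_mul_of_summable_sq hf hdf), Real.norm_of_nonneg (sq_nonneg _)] at this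
  rw [hshift] at h1
  linarith

end Agmon

theorem lp.norm_sq_eq_tsum {α : Type*} {E : α → Type*} [∀ i, NormedAddCommGroup (E i)]
    (f : lp E 2) : ‖f‖ ^ 2 = ∑' i, ‖f i‖ ^ 2 := by
  simpa using lp.norm_rpow_eq_tsum (p := 2) (by norm_num) f

theorem D1_D2_comm (φ : ℤ × ℤ → ℂ) : D1 (D2 φ) = D2 (D1 φ) := by
  funext p
  simp only [D1, D2]
  ring

section Rows

variable {φ : ℤ × ℤ → ℂ}

theorem summable_sq_norm_D1 (h : Summable fun p => ‖φ p‖ ^ 2) :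
    Summable fun p => ‖D1 φ p‖ ^ 2 :=
  summable_sq_norm_sub (h.comp_injective fun p q hpq => by simpa [Prod.ext_iff] using hpq) h

theorem summable_sq_norm_D2 (h : Summable fun p => ‖φ p‖ ^ 2) :
    Summable fun p => ‖D2 φ p‖ ^ 2 :=
  summable_sq_norm_sub (h.comp_injective fun p q hpq => by simpa [Prod.ext_iff] using hpq) h

def row (h : Summable fun p => ‖φ p‖ ^ 2) (k : ℤ) : lp (fun _ : ℤ => ℂ) 2 :=
  ⟨fun n => φ (k, n), memℓp_gen (by simpa using h.prod_factor k)⟩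

theorem sqrt_tsum_sq_norm_row (h : Summable fun p => ‖φ p‖ ^ 2) :
    √(∑' k, ‖row h k‖ ^ 2) = l2 φ := by
  rw [l2, h.tsum_prod]
  simp only [lp.norm_sq_eq_tsum]
  rfl

theorem summable_sq_norm_row (h : Summable fun p => ‖φ p‖ ^ 2) :
    Summable fun k => ‖row h k‖ ^ 2 := by
  simp only [lp.norm_sq_eq_tsum]
  exact h.prod

theorem row_add_one_sub (h : Summable fun p => ‖φ p‖ ^ 2) (k : ℤ) :
    row h (k + 1) - row h k = row (summable_sq_norm_D1 h) k := rfl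

theorem tsum_sq_norm_row_le (h : Summable fun p => ‖φ p‖ ^ 2) (m : ℤ) :
    ∑' n, ‖φ (m, n)‖ ^ 2 ≤ l2 (D1 φ) * l2 φ := by
  have := sq_norm_le_sqrt_tsum_sq_norm_sub_mul_sqrt_tsum_sq_norm (summable_sq_norm_row h) m
  simp only [row_add_one_sub] at this
  rwa [sqrt_tsum_sq_norm_row, sqrt_tsum_sq_norm_row, lp.norm_sq_eq_tsum] at this

end Rows

theorem Real.iSup_pow_le {ι : Sort*} [Nonempty ι] {f : ι → ℝ} (hf : ∀ i, 0 ≤ f i) {n : ℕ}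
    {c : ℝ} (h : ∀ i, f i ^ n ≤ c) : (⨆ i, f i) ^ n ≤ c := by
  lift f to ι → NNReal using hf
  rw [← NNReal.coe_iSup, ← NNReal.coe_pow, NNReal.iSup_pow, NNReal.coe_iSup]
  exact ciSup_le h

/-- 2D product estimate from the Agmon–Cauchy inequality. -/
theorem agmon_2d_product (φ : ℤ × ℤ → ℂ) (h : Summable fun p : ℤ × ℤ => ‖φ p‖ ^ 2) :
    (⨆ p : ℤ × ℤ, ‖φ p‖) ^ 4 ≤ l2 (D2 (D1 φ)) * l2 (D1 φ) * l2 (D2 φ) * l2 φ := by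
  refine Real.iSup_pow_le (fun p => norm_nonneg _) fun ⟨m, n⟩ => ?_
  have hφ := sq_norm_le_sqrt_tsum_sq_norm_sub_mul_sqrt_tsum_sq_norm (h.prod_factor m) n
  have hrow := tsum_sq_norm_row_le h m
  have hD2row := tsum_sq_norm_row_le (summable_sq_norm_D2 h) m
  rw [D1_D2_comm] at hD2row
  change ‖φ (m, n)‖ ^ 2 ≤ √(∑' k, ‖D2 φ (m, k)‖ ^ 2) * √(∑' k, ‖φ (m, k)‖ ^ 2) at hφ
  calc ‖φ (m, n)‖ ^ 4 = (‖φ (m, n)‖ ^ 2) ^ 2 := by ring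
    _ ≤ (√(∑' k, ‖D2 φ (m, k)‖ ^ 2) * √(∑' k, ‖φ (m, k)‖ ^ 2)) ^ 2 := by gcongr
    _ = (∑' k, ‖D2 φ (m, k)‖ ^ 2) * ∑' k, ‖φ (m, k)‖ ^ 2 := by
      rw [mul_pow, Real.sq_sqrt (tsum_nonneg fun _ => sq_nonneg _),
        Real.sq_sqrt (tsum_nonneg fun _ => sq_nonneg _)]
    _ ≤ (l2 (D2 (D1 φ)) * l2 (D2 φ)) * (l2 (D1 φ) * l2 φ) := by
      gcongr
      exact mul_nonneg (Real.sqrt_nonneg _) (Real.sqrt_nonneg _)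
    _ = l2 (D2 (D1 φ)) * l2 (D1 φ) * l2 (D2 φ) * l2 φ := by ring
end
end

section
/- For a square-summable sequence φ: ℤ² → ℂ, we have ‖φ‖_{ℓ∞(ℤ²)} ≤ (κ/2^{p/2})^{1/4} · ‖∇_D φ‖_{ℓ²(ℤ²)}^{p/4} · ‖φ‖_{ℓ²(ℤ²)}^{1−p/4} with p = 2 and κ = 2² = 4; explicitly, ‖φ‖_{ℓ∞(ℤ²)}⁴ ≤ 2 · ‖∇_D φ‖_{ℓ²(ℤ²)}² · ‖φ‖_{ℓ²(ℤ²)}². -/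
noncomputable section

/-!
Write `ψ = ‖φ‖²`. Along any lattice ray `p + ℕ • v` the function `ψ` tends to zero, so
telescoping gives `ψ p ≤ ∑ |Δ_v ψ|`. Since `|‖a‖² - ‖b‖²| ≤ (‖a‖ + ‖b‖) ‖a - b‖`, Cauchy–Schwarz
and translation invariance of the ℓ² norm bound this sum by `2 ‖φ‖₂ ‖Δ_v φ‖₂`. Multiplying the
bounds for `v = e₁` and `v = e₂` gives `‖φ‖∞⁴ ≤ 4 ‖φ‖₂² ‖D₁φ‖₂ ‖D₂φ‖₂ ≤ 2 ‖φ‖₂² ‖∇φ‖₂²`.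
-/

open Filter Topology Function fwdDiff

theorem norm_le_tsum_norm_sub_of_tendsto_zero {E : Type*} [SeminormedAddCommGroup E] {g : ℕ → E}
    (hg : Tendsto g atTop (𝓝 0)) (hs : Summable fun n => ‖g (n + 1) - g n‖) :
    ‖g 0‖ ≤ ∑' n, ‖g (n + 1) - g n‖ := by
  have hlim : Tendsto (fun n => dist (g 0) (g n)) atTop (𝓝 ‖g 0‖) := by
    simpa using tendsto_const_nhds.dist hg
  refine le_of_tendsto' hlim fun n => ?_
  calc dist (g 0) (g n) ≤ ∑ i ∈ Finset.range n, dist (g i) (g (i + 1)) :=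
        dist_le_range_sum_dist g n
    _ = ∑ i ∈ Finset.range n, ‖g (i + 1) - g i‖ :=
        Finset.sum_congr rfl fun i _ => by rw [dist_comm, dist_eq_norm]
    _ ≤ ∑' n, ‖g (n + 1) - g n‖ := hs.sum_le_tsum _ fun _ _ => norm_nonneg _

theorem Real.summable_mul_and_tsum_mul_le_sqrt_mul_sqrt {ι : Type*} {f g : ι → ℝ}
    (hf : ∀ i, 0 ≤ f i) (hg : ∀ i, 0 ≤ g i) (hf2 : Summable fun i => f i ^ 2)
    (hg2 : Summable fun i => g i ^ 2) :
    Summable (fun i => f i * g i) ∧ ∑' i, f i * g i ≤ √(∑' i, f i ^ 2) * √(∑' i, g i ^ 2) := by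
  simp only [← Real.rpow_two, Real.sqrt_eq_rpow] at hf2 hg2 ⊢
  exact Real.summable_and_inner_le_Lp_mul_Lq_tsum_of_nonneg .two_two hf hg hf2 hg2

theorem abs_sq_norm_sub_sq_norm_le {E : Type*} [SeminormedAddCommGroup E] (a b : E) :
    |‖a‖ ^ 2 - ‖b‖ ^ 2| ≤ ‖a‖ * ‖a - b‖ + ‖b‖ * ‖a - b‖ := by
  rw [sq_sub_sq, abs_mul, abs_of_nonneg (by positivity), ← add_mul]
  exact mul_le_mul_of_nonneg_left (abs_norm_sub_norm_le a b) (by positivity)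

theorem sq_iSup_norm_le {ι E : Type*} [Nonempty ι] [SeminormedAddCommGroup E] {φ : ι → E}
    {K : ℝ} (hK : ∀ p, ‖φ p‖ ^ 2 ≤ K) : (⨆ p, ‖φ p‖) ^ 2 ≤ K := by
  have hK₀ : 0 ≤ K := (sq_nonneg _).trans (hK (Classical.arbitrary ι))
  calc (⨆ p, ‖φ p‖) ^ 2 ≤ √K ^ 2 := by
        gcongr
        · exact Real.iSup_nonneg fun p => norm_nonneg _
        · exact ciSup_le fun p => Real.le_sqrt_of_sq_le (hK p)
    _ = K := Real.sq_sqrt hK₀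

section fwdDiff

variable {G E : Type*} [AddCommGroup G] [SeminormedAddCommGroup E]

theorem norm_le_tsum_norm_fwdDiff {v : G} (hv : Injective fun n : ℕ => n • v) {ψ : G → E}
    (hψ : Tendsto ψ cofinite (𝓝 0)) (hΔ : Summable fun q => ‖Δ_[v] ψ q‖) (p : G) :
    ‖ψ p‖ ≤ ∑' q, ‖Δ_[v] ψ q‖ := by
  have hray : Injective fun n : ℕ => p + n • v := (add_right_injective p).comp hv
  have hψray : Tendsto (fun n : ℕ => ψ (p + n • v)) atTop (𝓝 0) := by
    rw [← Nat.cofinite_eq_atTop]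
    exact hψ.comp hray.tendsto_cofinite
  have hstep : ∀ n : ℕ, ψ (p + (n + 1) • v) - ψ (p + n • v) = Δ_[v] ψ (p + n • v) := by
    intro n
    rw [fwdDiff, succ_nsmul, add_assoc]
  calc ‖ψ p‖ = ‖ψ (p + (0 : ℕ) • v)‖ := by rw [zero_nsmul, add_zero]
    _ ≤ ∑' n : ℕ, ‖ψ (p + (n + 1) • v) - ψ (p + n • v)‖ := by
        refine norm_le_tsum_norm_sub_of_tendsto_zero hψray ?_
        simpa only [hstep, comp_def] using hΔ.comp_injective hray
    _ = ∑' n : ℕ, ‖Δ_[v] ψ (p + n • v)‖ := by simp only [hstep]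
    _ ≤ ∑' q, ‖Δ_[v] ψ q‖ := tsum_comp_le_tsum_of_inj hΔ (fun _ => norm_nonneg _) hray

variable {φ : G → E}

theorem summable_sq_norm_comp_add_right (h : Summable fun q => ‖φ q‖ ^ 2) (v : G) :
    Summable fun q => ‖φ (q + v)‖ ^ 2 :=
  (Equiv.addRight v).summable_iff (f := fun q => ‖φ q‖ ^ 2) |>.2 h

theorem summable_sq_norm_fwdDiff (h : Summable fun q => ‖φ q‖ ^ 2) (v : G) :
    Summable fun q => ‖Δ_[v] φ q‖ ^ 2 := by
  refine .of_nonneg_of_le (fun _ => sq_nonneg _) (fun q => ?_)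
    (((summable_sq_norm_comp_add_right h v).add h).mul_left 2)
  calc ‖Δ_[v] φ q‖ ^ 2 ≤ (‖φ (q + v)‖ + ‖φ q‖) ^ 2 := by
        gcongr
        exact norm_sub_le _ _
    _ ≤ 2 * (‖φ (q + v)‖ ^ 2 + ‖φ q‖ ^ 2) := add_sq_le

theorem summable_norm_fwdDiff_sq_norm (h : Summable fun q => ‖φ q‖ ^ 2) (v : G) :
    Summable fun q => ‖Δ_[v] (fun q => ‖φ q‖ ^ 2) q‖ :=
  ((summable_sq_norm_comp_add_right h v).sub h).norm

theorem tsum_norm_fwdDiff_sq_norm_le (h : Summable fun q => ‖φ q‖ ^ 2) (v : G) :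
    ∑' q, ‖Δ_[v] (fun q => ‖φ q‖ ^ 2) q‖ ≤
      2 * √(∑' q, ‖φ q‖ ^ 2) * √(∑' q, ‖Δ_[v] φ q‖ ^ 2) := by
  have hΔ := summable_sq_norm_fwdDiff h v
  obtain ⟨hs₁, hcs₁⟩ := Real.summable_mul_and_tsum_mul_le_sqrt_mul_sqrt
    (fun q => norm_nonneg (φ (q + v))) (fun q => norm_nonneg _)
    (summable_sq_norm_comp_add_right h v) hΔ
  obtain ⟨hs₂, hcs₂⟩ := Real.summable_mul_and_tsum_mul_le_sqrt_mul_sqrt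
    (fun q => norm_nonneg (φ q)) (fun q => norm_nonneg _) h hΔ
  have hshift : ∑' q, ‖φ (q + v)‖ ^ 2 = ∑' q, ‖φ q‖ ^ 2 :=
    (Equiv.addRight v).tsum_eq fun q => ‖φ q‖ ^ 2
  rw [hshift] at hcs₁
  calc ∑' q, ‖Δ_[v] (fun q => ‖φ q‖ ^ 2) q‖
      ≤ ∑' q, (‖φ (q + v)‖ * ‖Δ_[v] φ q‖ + ‖φ q‖ * ‖Δ_[v] φ q‖) :=
        (summable_norm_fwdDiff_sq_norm h v).tsum_le_tsum
          (fun q => abs_sq_norm_sub_sq_norm_le _ _) (hs₁.add hs₂)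
    _ = ∑' q, ‖φ (q + v)‖ * ‖Δ_[v] φ q‖ + ∑' q, ‖φ q‖ * ‖Δ_[v] φ q‖ := hs₁.tsum_add hs₂
    _ ≤ 2 * √(∑' q, ‖φ q‖ ^ 2) * √(∑' q, ‖Δ_[v] φ q‖ ^ 2) := by linarith

theorem sq_norm_le_two_mul_sqrt_tsum_mul_sqrt_tsum_fwdDiff {v : G}
    (hv : Injective fun n : ℕ => n • v) (h : Summable fun q => ‖φ q‖ ^ 2) (p : G) :
    ‖φ p‖ ^ 2 ≤ 2 * √(∑' q, ‖φ q‖ ^ 2) * √(∑' q, ‖Δ_[v] φ q‖ ^ 2) := by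
  have := norm_le_tsum_norm_fwdDiff hv h.tendsto_cofinite_zero
    (summable_norm_fwdDiff_sq_norm h v) p
  rw [norm_pow, norm_norm] at this
  exact this.trans (tsum_norm_fwdDiff_sq_norm_le h v)

end fwdDiff

theorem D1_eq_fwdDiff (φ : ℤ × ℤ → ℂ) : D1 φ = Δ_[(1, 0)] φ := by
  ext p
  simp [D1, fwdDiff, Prod.add_def]

theorem D2_eq_fwdDiff (φ : ℤ × ℤ → ℂ) : D2 φ = Δ_[(0, 1)] φ := by
  ext p
  simp [D2, fwdDiff, Prod.add_def]

theorem injective_nsmul_one_zero : Injective fun n : ℕ => n • ((1, 0) : ℤ × ℤ) := by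
  intro m n h
  simpa using congrArg Prod.fst h

theorem injective_nsmul_zero_one : Injective fun n : ℕ => n • ((0, 1) : ℤ × ℤ) := by
  intro m n h
  simpa using congrArg Prod.snd h

/-- Agmon–Kolmogorov inequality on ℤ² with p = 2, explicit form. -/
theorem agmon_kolmogorov_2d_p2 (φ : ℤ × ℤ → ℂ) (h : Summable fun p : ℤ × ℤ => ‖φ p‖ ^ 2) :
    (⨆ p : ℤ × ℤ, ‖φ p‖) ^ 4 ≤
      2 * (l2 (D1 φ) ^ 2 + l2 (D2 φ) ^ 2) * l2 φ ^ 2 := by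
  have h₁ : (⨆ p, ‖φ p‖) ^ 2 ≤ 2 * l2 φ * l2 (D1 φ) := sq_iSup_norm_le fun p => by
    simpa only [l2, D1_eq_fwdDiff] using
      sq_norm_le_two_mul_sqrt_tsum_mul_sqrt_tsum_fwdDiff injective_nsmul_one_zero h p
  have h₂ : (⨆ p, ‖φ p‖) ^ 2 ≤ 2 * l2 φ * l2 (D2 φ) := sq_iSup_norm_le fun p => by
    simpa only [l2, D2_eq_fwdDiff] using
      sq_norm_le_two_mul_sqrt_tsum_mul_sqrt_tsum_fwdDiff injective_nsmul_zero_one h p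
  have hM : 0 ≤ (⨆ p, ‖φ p‖) ^ 2 := sq_nonneg _
  calc (⨆ p, ‖φ p‖) ^ 4 = (⨆ p, ‖φ p‖) ^ 2 * (⨆ p, ‖φ p‖) ^ 2 := by ring
    _ ≤ (2 * l2 φ * l2 (D1 φ)) * (2 * l2 φ * l2 (D2 φ)) := mul_le_mul h₁ h₂ hM (hM.trans h₁)
    _ = 2 * (2 * l2 (D1 φ) * l2 (D2 φ)) * l2 φ ^ 2 := by ring
    _ ≤ 2 * (l2 (D1 φ) ^ 2 + l2 (D2 φ) ^ 2) * l2 φ ^ 2 := by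
        gcongr
        exact two_mul_le_add_sq _ _
end
end

section
/- For a square-summable two-sided sequence a: ℤ → ℂ, ‖Da‖²_{ℓ²(ℤ)} ≤ ‖a‖_{ℓ²(ℤ)} · ‖D²a‖_{ℓ²(ℤ)}, where (Da)(n) := a(n+1) − a(n) and D²a(n) = a(n+2) − 2a(n+1) + a(n). -/
/-!
Realise `a` as a vector `x` of the Hilbert space `ℓ²(ℤ)`, on which the shift `S x = x(· + 1)` is an
isometry, so that `Da = S x - x` and `D²a = S y - y` with `y = S x - x`. Since `S` preserves inner
products, `⟪S y - y, S x⟫ = ⟪y, x⟫ - ⟪y, S x⟫ = -‖y‖²`, and Cauchy–Schwarz gives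
`‖y‖² ≤ ‖S y - y‖ ‖S x‖ = ‖D²a‖ ‖a‖`.
-/

open scoped ENNReal InnerProductSpace

section InnerProductSpace

variable {𝕜 E : Type*} [RCLike 𝕜] [NormedAddCommGroup E] [InnerProductSpace 𝕜 E]

theorem LinearIsometry.inner_sub_self_sub_self_map (S : E →ₗᵢ[𝕜] E) (x : E) :
    ⟪S (S x - x) - (S x - x), S x⟫_𝕜 = -⟪S x - x, S x - x⟫_𝕜 := by
  rw [inner_sub_left, S.inner_map_map, ← inner_sub_right, ← inner_neg_right, neg_sub]

theorem LinearIsometry.norm_sub_self_sq_le (S : E →ₗᵢ[𝕜] E) (x : E) :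
    ‖S x - x‖ ^ 2 ≤ ‖x‖ * ‖S (S x - x) - (S x - x)‖ :=
  calc ‖S x - x‖ ^ 2 = -RCLike.re ⟪S (S x - x) - (S x - x), S x⟫_𝕜 := by
        rw [S.inner_sub_self_sub_self_map, map_neg, neg_neg, inner_self_eq_norm_sq]
    _ ≤ ‖⟪S (S x - x) - (S x - x), S x⟫_𝕜‖ := (neg_le_abs _).trans (RCLike.abs_re_le_norm _)
    _ ≤ ‖S (S x - x) - (S x - x)‖ * ‖S x‖ := norm_inner_le_norm _ _
    _ = ‖x‖ * ‖S (S x - x) - (S x - x)‖ := by rw [S.norm_map, mul_comm]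

end InnerProductSpace

section lp

variable {α β E : Type*} [NormedAddCommGroup E] {p : ℝ≥0∞}

theorem Memℓp.comp_equiv (hp : 0 < p.toReal) {f : β → E} (hf : Memℓp f p) (e : α ≃ β) :
    Memℓp (f ∘ e) p :=
  (memℓp_gen_iff hp).2 <| e.summable_iff.2 <| (memℓp_gen_iff hp).1 hf

variable [Fact (1 ≤ p)] (𝕜 : Type*) [NormedField 𝕜] [NormedSpace 𝕜 E]

def lp.compEquiv (hp : 0 < p.toReal) (e : α ≃ β) :
    lp (fun _ : β => E) p →ₗᵢ[𝕜] lp (fun _ : α => E) p where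
  toFun f := ⟨f ∘ e, (lp.memℓp f).comp_equiv hp e⟩
  map_add' _ _ := rfl
  map_smul' _ _ := rfl
  norm_map' f := by
    simp only [lp.norm_eq_tsum_rpow hp]
    exact congrArg (· ^ _) (e.tsum_eq fun b => ‖f b‖ ^ p.toReal)

end lp

theorem lp.norm_eq_sqrt_tsum_sq {ι : Type*} {E : ι → Type*} [∀ i, NormedAddCommGroup (E i)]
    (f : lp E 2) : ‖f‖ = √(∑' i, ‖f i‖ ^ 2) := by
  have h := lp.norm_rpow_eq_tsum (by norm_num : 0 < (2 : ℝ≥0∞).toReal) f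
  simp only [ENNReal.toReal_ofNat, Real.rpow_two] at h
  rw [← h, Real.sqrt_sq (norm_nonneg f)]

/-- Copson's inequality on the whole line. -/
theorem copson_line (a : ℤ → ℂ) (h : Summable fun n => ‖a n‖ ^ 2) :
    ∑' n : ℤ, ‖a (n + 1) - a n‖ ^ 2 ≤
      Real.sqrt (∑' n : ℤ, ‖a n‖ ^ 2) *
        Real.sqrt (∑' n : ℤ, ‖a (n + 2) - 2 * a (n + 1) + a n‖ ^ 2) := by
  let x : lp (fun _ : ℤ => ℂ) 2 := ⟨a, memℓp_gen (by simpa using h)⟩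
  let S := lp.compEquiv (E := ℂ) (p := 2) ℂ (by norm_num) (Equiv.addRight (1 : ℤ))
  have hS : ∀ y : lp (fun _ : ℤ => ℂ) 2, ∀ n, S y n = y (n + 1) := fun _ _ => rfl
  have hx : ∀ n, x n = a n := fun _ => rfl
  have key := S.norm_sub_self_sq_le x
  simp only [lp.norm_eq_sqrt_tsum_sq, lp.coeFn_sub, Pi.sub_apply, hS, hx] at key
  rw [Real.sq_sqrt (tsum_nonneg fun _ => by positivity)] at key
  convert key using 6 with n
  rw [add_assoc n 1 1, one_add_one_eq_two]
  congr 1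
  ring
end
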